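/- Let D ≥ 2, let n = 2D or n = 2D+1, let ζ = exp(2πi/n), and let Γ be the cycle graph on ZMod n with graph distance ∂. For h,i,j ∈ {0,…,D}, let P_{h,i,j} : (ZMod n)³ → ℂ be the indicator function of {(x,y,z) : ∂(y,z)=h, ∂(x,z)=i, ∂(x,y)=j}. Then the set {P_{h,i,j} : h,i,j ∈ {0,…,D}, P_{h,i,j} ≠ 0} is a basis of the ℂ-space Fix(Aut) of Aut(Γ)-invariant functions on (ZMod n)³. Moreover, for all h,i,j and all (x,y,z): (A^{*(1)} P_{h,i,j})(x,y,z) = (ζ^h + ζ^{-h}) P_{h,i,j}(x,y,z), (A^{*(2)} P_{h,i,j})(x,y,z) = (ζ^i + ζ^{-i}) P_{h,i,j}(x,y,z), and (A^{*(3)} P_{h,i,j})(x,y,z) = (ζ^j + ζ^{-j}) P_{h,i,j}(x,y,z). -/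

import Mathlib

/-- Adjacency in the cycle graph on `ZMod n`. -/
def cycAdj (n : ℕ) (x y : ZMod n) : Prop := x - y = 1 ∨ y - x = 1

/-- Graph distance in the cycle graph on `ZMod n`. -/
def cycDist (n : ℕ) (x y : ZMod n) : ℕ := min (x - y).val (n - (x - y).val)

/-- The automorphism group of the cycle graph on `ZMod n`. -/
def cycAut (n : ℕ) : Subgroup (Equiv.Perm (ZMod n)) where
  carrier := {g | ∀ x y, cycAdj n (g x) (g y) ↔ cycAdj n x y}
  one_mem' := by intro x y; simp
  mul_mem' := by
    intro a b ha hb x y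
    simp only [Equiv.Perm.mul_apply]
    exact (ha (b x) (b y)).trans (hb x y)
  inv_mem' := by
    intro a ha x y
    have h := ha (a⁻¹ x) (a⁻¹ y)
    simpa using h.symm

/-- The subspace `Fix(Aut)` of `Aut(Γ)`-invariant complex functions on triples. -/
noncomputable def fixSubmodule (n : ℕ) : Submodule ℂ ((ZMod n × ZMod n × ZMod n) → ℂ) where
  carrier := {f | ∀ g ∈ cycAut n, ∀ x y z : ZMod n, f (g x, g y, g z) = f (x, y, z)}
  add_mem' := by intro f h hf hh g hg x y z; simp [hf g hg x y z, hh g hg x y z]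
  zero_mem' := by intro g hg x y z; rfl
  smul_mem' := by intro c f hf g hg x y z; simp [hf g hg x y z]

/-- The indicator function `P_{h,i,j}` of the set of triples with distance profile
`(h,i,j)`. -/
noncomputable def Pfun (n : ℕ) (h i j : ℕ) : ZMod n × ZMod n × ZMod n → ℂ := fun t =>
  if cycDist n t.2.1 t.2.2 = h ∧ cycDist n t.1 t.2.2 = i ∧ cycDist n t.1 t.2.1 = j
  then 1 else 0

/-- The operator `A^{*(1)}`: pointwise multiplication by `ζ^{∂(y,z)} + ζ^{-∂(y,z)}`. -/
noncomputable def Astar1 (n : ℕ) (ζ : ℂ) (f : ZMod n × ZMod n × ZMod n → ℂ) :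
    ZMod n × ZMod n × ZMod n → ℂ := fun t =>
  (ζ ^ (cycDist n t.2.1 t.2.2 : ℤ) + ζ ^ (-(cycDist n t.2.1 t.2.2 : ℤ))) * f t

/-- The operator `A^{*(2)}`: pointwise multiplication by `ζ^{∂(x,z)} + ζ^{-∂(x,z)}`. -/
noncomputable def Astar2 (n : ℕ) (ζ : ℂ) (f : ZMod n × ZMod n × ZMod n → ℂ) :
    ZMod n × ZMod n × ZMod n → ℂ := fun t =>
  (ζ ^ (cycDist n t.1 t.2.2 : ℤ) + ζ ^ (-(cycDist n t.1 t.2.2 : ℤ))) * f t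

/-- The operator `A^{*(3)}`: pointwise multiplication by `ζ^{∂(x,y)} + ζ^{-∂(x,y)}`. -/
noncomputable def Astar3 (n : ℕ) (ζ : ℂ) (f : ZMod n × ZMod n × ZMod n → ℂ) :
    ZMod n × ZMod n × ZMod n → ℂ := fun t =>
  (ζ ^ (cycDist n t.1 t.2.1 : ℤ) + ζ ^ (-(cycDist n t.1 t.2.1 : ℤ))) * f t

/-! The distance `∂(x,y)` is `|valMinAbs (x - y)|`, so equal distances mean equal differences up
to sign. Hence two triples with the same distance profile are related by a map `t ↦ ±t + c`, an
automorphism; conversely automorphisms preserve distances, because they preserve adjacency and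
every distance is realised by a path of adjacent steps. So the invariant functions are exactly the
functions of the profile, the `P_{h,i,j}` are the indicators of the (disjoint) profile classes,
and each `A^{*(k)}` multiplies by a function of the profile. -/

section CycleGraph

variable {n : ℕ} [NeZero n]

lemma cycDist_eq_natAbs_valMinAbs (x y : ZMod n) :
    cycDist n x y = (x - y).valMinAbs.natAbs :=
  ((x - y).valMinAbs_natAbs_eq_min).symm

lemma cycDist_comm (x y : ZMod n) : cycDist n x y = cycDist n y x := by
  rw [cycDist_eq_natAbs_valMinAbs, cycDist_eq_natAbs_valMinAbs, ← neg_sub,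
    ZMod.natAbs_valMinAbs_neg]

lemma cycDist_eq_zero_iff {x y : ZMod n} : cycDist n x y = 0 ↔ x = y := by
  rw [cycDist_eq_natAbs_valMinAbs, Int.natAbs_eq_zero, ZMod.valMinAbs_eq_zero, sub_eq_zero]

lemma cycDist_le_half (x y : ZMod n) : cycDist n x y ≤ n / 2 := by
  rw [cycDist_eq_natAbs_valMinAbs]
  exact ZMod.natAbs_valMinAbs_le _

lemma cycDist_triangle (x y z : ZMod n) : cycDist n x z ≤ cycDist n x y + cycDist n y z := by
  simp only [cycDist_eq_natAbs_valMinAbs]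
  calc (x - z).valMinAbs.natAbs
      = ((x - y) + (y - z)).valMinAbs.natAbs := by rw [sub_add_sub_cancel]
    _ ≤ ((x - y).valMinAbs + (y - z).valMinAbs).natAbs := ZMod.natAbs_valMinAbs_add_le _ _
    _ ≤ _ := Int.natAbs_add_le _ _

lemma cycDist_eq_cycDist_iff {x y x' y' : ZMod n} :
    cycDist n x' y' = cycDist n x y ↔ y' - x' = y - x ∨ y' - x' = -(y - x) := by
  rw [cycDist_comm x', cycDist_comm x, cycDist_eq_natAbs_valMinAbs, cycDist_eq_natAbs_valMinAbs,
    ZMod.natAbs_valMinAbs_eq_natAbs_valMinAbs]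

lemma cycDist_le_one_of_cycAdj {x y : ZMod n} (h : cycAdj n x y) : cycDist n x y ≤ 1 := by
  have key : ∀ a b : ZMod n, a - b = 1 → cycDist n a b ≤ 1 := fun a b hab =>
    (min_le_left _ _).trans (by rw [hab, ZMod.val_one_eq_one_mod]; exact Nat.mod_le 1 n)
  rcases h with h | h
  · exact key x y h
  · rw [cycDist_comm]; exact key y x h

lemma exists_cycAdj_cycDist_eq {x y : ZMod n} {k : ℕ} (h : cycDist n x y = k + 1) :
    ∃ z, cycAdj n z y ∧ cycDist n x z = k := by
  rw [cycDist_eq_natAbs_valMinAbs] at h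
  have hmem := (x - y).valMinAbs_mem_Ioc
  have hcast := (x - y).coe_valMinAbs
  rcases Int.natAbs_eq (x - y).valMinAbs with hv | hv <;> rw [h] at hv <;>
    rw [hv, Set.mem_Ioc] at hmem <;> rw [hv] at hcast <;> push_cast at hmem hcast
  · refine ⟨y + 1, Or.inl (add_sub_cancel_left y 1), ?_⟩
    rw [cycDist_eq_natAbs_valMinAbs, (ZMod.valMinAbs_spec _ k).mpr, Int.natAbs_natCast]
    refine ⟨by push_cast; linear_combination -hcast, ?_, ?_⟩ <;> omega
  · refine ⟨y - 1, Or.inr (sub_sub_cancel y 1), ?_⟩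
    rw [cycDist_eq_natAbs_valMinAbs, (ZMod.valMinAbs_spec _ (-k)).mpr, Int.natAbs_neg,
      Int.natAbs_natCast]
    refine ⟨by push_cast; linear_combination -hcast, ?_, ?_⟩ <;> omega

end CycleGraph

section Automorphisms

variable {n : ℕ}

lemma addRight_mem_cycAut (c : ZMod n) : Equiv.addRight c ∈ cycAut n := by
  intro x y
  simp only [cycAdj, Equiv.coe_addRight, add_sub_add_right_eq_sub]

lemma neg_mem_cycAut : Equiv.neg (ZMod n) ∈ cycAut n := by
  intro x y
  simp only [cycAdj, Equiv.neg_apply, neg_sub_neg]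
  exact or_comm

variable [NeZero n]

lemma cycDist_apply_le_of_mem_cycAut {g : Equiv.Perm (ZMod n)} (hg : g ∈ cycAut n)
    (x y : ZMod n) : cycDist n (g x) (g y) ≤ cycDist n x y := by
  suffices ∀ k y, cycDist n x y = k → cycDist n (g x) (g y) ≤ k from this _ y rfl
  intro k
  induction k with
  | zero => intro y hy; rw [cycDist_eq_zero_iff.mp hy, cycDist_eq_zero_iff.mpr rfl]
  | succ k ih =>
    intro y hx
    obtain ⟨z, hzy, hxz⟩ := exists_cycAdj_cycDist_eq hx
    calc cycDist n (g x) (g y) ≤ cycDist n (g x) (g z) + cycDist n (g z) (g y) :=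
          cycDist_triangle _ _ _
      _ ≤ k + 1 :=
        add_le_add (ih z hxz) (cycDist_le_one_of_cycAdj ((hg z y).mpr hzy))

lemma cycDist_apply_of_mem_cycAut {g : Equiv.Perm (ZMod n)} (hg : g ∈ cycAut n)
    (x y : ZMod n) : cycDist n (g x) (g y) = cycDist n x y := by
  refine (cycDist_apply_le_of_mem_cycAut hg x y).antisymm ?_
  simpa using cycDist_apply_le_of_mem_cycAut (inv_mem hg) (g x) (g y)

def distProfile (n : ℕ) (t : ZMod n × ZMod n × ZMod n) : ℕ × ℕ × ℕ :=
  (cycDist n t.2.1 t.2.2, cycDist n t.1 t.2.2, cycDist n t.1 t.2.1)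

lemma distProfile_apply_of_mem_cycAut {g : Equiv.Perm (ZMod n)} (hg : g ∈ cycAut n)
    (x y z : ZMod n) : distProfile n (g x, g y, g z) = distProfile n (x, y, z) := by
  simp only [distProfile, cycDist_apply_of_mem_cycAut hg]

/-- The translations and the reflection `t ↦ -t` already suffice. -/
lemma exists_mem_cycAut_of_distProfile_eq {x y z x' y' z' : ZMod n}
    (h : distProfile n (x', y', z') = distProfile n (x, y, z)) :
    ∃ g ∈ cycAut n, g x = x' ∧ g y = y' ∧ g z = z' := by
  simp only [distProfile, Prod.mk.injEq, cycDist_eq_cycDist_iff] at h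
  obtain ⟨hyz, hxz, hxy⟩ := h
  have hsign : (y' - x' = y - x ∧ z' - x' = z - x) ∨
      (y' - x' = -(y - x) ∧ z' - x' = -(z - x)) := by
    -- With mixed signs, `hyz` forces `2 (y - x) = 0` or `2 (z - x) = 0`, and then either sign fits.
    rcases hxy with hxy | hxy <;> rcases hxz with hxz | hxz <;> grind
  rcases hsign with ⟨hy, hz⟩ | ⟨hy, hz⟩
  · refine ⟨Equiv.addRight (x' - x), addRight_mem_cycAut _, ?_, ?_, ?_⟩ <;>
      simp only [Equiv.coe_addRight]
    · ring
    · linear_combination -hy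
    · linear_combination -hz
  · refine ⟨Equiv.addRight (x' + x) * Equiv.neg _,
      mul_mem (addRight_mem_cycAut _) neg_mem_cycAut, ?_, ?_, ?_⟩ <;>
      simp only [Equiv.Perm.mul_apply, Equiv.neg_apply, Equiv.coe_addRight]
    · ring
    · linear_combination -hy
    · linear_combination -hz

end Automorphisms

lemma linearIndependent_of_disjoint_support {ι α K : Type*} [Ring K] [NoZeroDivisors K]
    {v : ι → α → K} (hne : ∀ i, v i ≠ 0)
    (hdisj : ∀ i j t, v i t ≠ 0 → v j t ≠ 0 → i = j) :
    LinearIndependent K v := by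
  classical
  rw [linearIndependent_iff']
  intro s c hsum i hi
  obtain ⟨t, ht⟩ := Function.ne_iff.mp (hne i)
  have hsum_t := congrFun hsum t
  simp only [Finset.sum_apply, Pi.smul_apply, smul_eq_mul, Pi.zero_apply] at hsum_t
  rw [Finset.sum_eq_single_of_mem i hi fun j _ hji => ?_] at hsum_t
  · exact (mul_eq_zero.mp hsum_t).resolve_right ht
  · by_contra hj
    exact hji (hdisj j i t (right_ne_zero_of_mul hj) ht)

lemma comp_eq_sum_smul_indicator {α β K : Type*} [DecidableEq β] [Semiring K] (φ : α → β)
    (F : β → K) {s : Finset β} (hs : ∀ a, φ a ∈ s) :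
    F ∘ φ = ∑ b ∈ s, F b • fun a => if φ a = b then (1 : K) else 0 := by
  funext a
  simp [Finset.sum_apply, hs a]

section InvariantFunctions

variable {n : ℕ}

lemma Pfun_eq_ite (h i j : ℕ) :
    Pfun n h i j = fun t => if distProfile n t = (h, i, j) then 1 else 0 := by
  funext t
  simp only [Pfun, distProfile, Prod.mk.injEq]

lemma distProfile_eq_of_Pfun_ne_zero {h i j : ℕ} {t : ZMod n × ZMod n × ZMod n}
    (ht : Pfun n h i j t ≠ 0) : distProfile n t = (h, i, j) := by
  by_contra hne
  simp [Pfun_eq_ite, hne] at ht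

lemma mul_Pfun_eq_smul (w : ℕ × ℕ × ℕ → ℂ) (h i j : ℕ) :
    (fun t => w (distProfile n t) * Pfun n h i j t) = w (h, i, j) • Pfun n h i j := by
  funext t
  simp only [Pfun_eq_ite, Pi.smul_apply, smul_eq_mul]
  split_ifs with ht <;> simp [ht]

lemma Pfun_eq_of_apply_ne_zero {h i j h' i' j' : ℕ} {t : ZMod n × ZMod n × ZMod n}
    (ht : Pfun n h i j t ≠ 0) (ht' : Pfun n h' i' j' t ≠ 0) :
    Pfun n h i j = Pfun n h' i' j' := by
  have hp := (distProfile_eq_of_Pfun_ne_zero ht).symm.trans (distProfile_eq_of_Pfun_ne_zero ht')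
  obtain ⟨rfl, rfl, rfl⟩ := Prod.mk.injEq _ _ _ _ ▸ hp
  rfl

variable [NeZero n]

lemma Pfun_mem_fixSubmodule (h i j : ℕ) : Pfun n h i j ∈ fixSubmodule n := by
  intro g hg x y z
  simp only [Pfun_eq_ite, distProfile_apply_of_mem_cycAut hg]

lemma factorsThrough_distProfile {f : ZMod n × ZMod n × ZMod n → ℂ}
    (hf : f ∈ fixSubmodule n) :
    f.FactorsThrough (distProfile n) := by
  rintro ⟨x, y, z⟩ ⟨x', y', z'⟩ h
  obtain ⟨g, hg, rfl, rfl, rfl⟩ := exists_mem_cycAut_of_distProfile_eq h.symm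
  exact (hf g hg x y z).symm

lemma distProfile_mem_box {D : ℕ} (hD : n ≤ 2 * D + 1) (t : ZMod n × ZMod n × ZMod n) :
    distProfile n t ∈
      Finset.range (D + 1) ×ˢ Finset.range (D + 1) ×ˢ Finset.range (D + 1) := by
  have hle : ∀ x y : ZMod n, cycDist n x y < D + 1 := fun x y =>
    (cycDist_le_half x y).trans_lt (by omega)
  simp only [distProfile, Finset.mem_product, Finset.mem_range, hle, and_self]

end InvariantFunctions

theorem stmt_10_general (D n : ℕ) (hn : n = 2 * D ∨ n = 2 * D + 1) [NeZero n]
    (ζ : ℂ) :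
    (LinearIndependent ℂ (fun f : {f : ZMod n × ZMod n × ZMod n → ℂ //
        (∃ h i j : ℕ, h ≤ D ∧ i ≤ D ∧ j ≤ D ∧ f = Pfun n h i j) ∧ f ≠ 0} => f.1)
      ∧ Submodule.span ℂ {f : ZMod n × ZMod n × ZMod n → ℂ |
          (∃ h i j : ℕ, h ≤ D ∧ i ≤ D ∧ j ≤ D ∧ f = Pfun n h i j) ∧ f ≠ 0}
        = fixSubmodule n)
    ∧ (∀ h i j : ℕ, h ≤ D → i ≤ D → j ≤ D →
        Astar1 n ζ (Pfun n h i j) = (ζ ^ (h : ℤ) + ζ ^ (-(h : ℤ))) • Pfun n h i j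
        ∧ Astar2 n ζ (Pfun n h i j) = (ζ ^ (i : ℤ) + ζ ^ (-(i : ℤ))) • Pfun n h i j
        ∧ Astar3 n ζ (Pfun n h i j) = (ζ ^ (j : ℤ) + ζ ^ (-(j : ℤ))) • Pfun n h i j) := by
  refine ⟨⟨?_, le_antisymm ?_ ?_⟩, fun h i j _ _ _ => ⟨?_, ?_, ?_⟩⟩
  · refine linearIndependent_of_disjoint_support (fun f => f.2.2) ?_
    rintro ⟨_, ⟨h, i, j, -, -, -, rfl⟩, -⟩ ⟨_, ⟨h', i', j', -, -, -, rfl⟩, -⟩ t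
    exact fun ht ht' => Subtype.ext (Pfun_eq_of_apply_ne_zero ht ht')
  · rw [Submodule.span_le]
    rintro _ ⟨⟨h, i, j, -, -, -, rfl⟩, -⟩
    exact Pfun_mem_fixSubmodule h i j
  · intro f hf
    rw [← (factorsThrough_distProfile hf).extend_comp (0 : ℕ × ℕ × ℕ → ℂ),
      comp_eq_sum_smul_indicator _ _ (distProfile_mem_box (D := D) (by omega))]
    refine Submodule.sum_mem _ fun ⟨h, i, j⟩ hp => ?_
    rw [← Pfun_eq_ite]
    by_cases hP : Pfun n h i j = 0
    · rw [hP, smul_zero]; exact Submodule.zero_mem _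
    · simp only [Finset.mem_product, Finset.mem_range] at hp
      exact Submodule.smul_mem _ _ (Submodule.subset_span
        ⟨⟨h, i, j, by omega, by omega, by omega, rfl⟩, hP⟩)
  · exact mul_Pfun_eq_smul (fun p => ζ ^ (p.1 : ℤ) + ζ ^ (-(p.1 : ℤ))) h i j
  · exact mul_Pfun_eq_smul (fun p => ζ ^ (p.2.1 : ℤ) + ζ ^ (-(p.2.1 : ℤ))) h i j
  · exact mul_Pfun_eq_smul (fun p => ζ ^ (p.2.2 : ℤ) + ζ ^ (-(p.2.2 : ℤ))) h i j

/-- the nonzero indicator functions `P_{h,i,j}` (for `h,i,j ∈ {0,…,D}`)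
form a basis of `Fix(Aut)`, and each `P_{h,i,j}` is a common eigenvector of the
operators `A^{*(1)}, A^{*(2)}, A^{*(3)}` with eigenvalues `ζ^h + ζ^{-h}`,
`ζ^i + ζ^{-i}`, `ζ^j + ζ^{-j}` respectively. -/
theorem stmt_10 (D n : ℕ) (hD : 2 ≤ D) (hn : n = 2 * D ∨ n = 2 * D + 1) [NeZero n]
    (ζ : ℂ) (hζ : ζ = Complex.exp (2 * Real.pi * Complex.I / n)) :
    (LinearIndependent ℂ (fun f : {f : ZMod n × ZMod n × ZMod n → ℂ //
        (∃ h i j : ℕ, h ≤ D ∧ i ≤ D ∧ j ≤ D ∧ f = Pfun n h i j) ∧ f ≠ 0} => f.1)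
      ∧ Submodule.span ℂ {f : ZMod n × ZMod n × ZMod n → ℂ |
          (∃ h i j : ℕ, h ≤ D ∧ i ≤ D ∧ j ≤ D ∧ f = Pfun n h i j) ∧ f ≠ 0}
        = fixSubmodule n)
    ∧ (∀ h i j : ℕ, h ≤ D → i ≤ D → j ≤ D →
        Astar1 n ζ (Pfun n h i j) = (ζ ^ (h : ℤ) + ζ ^ (-(h : ℤ))) • Pfun n h i j
        ∧ Astar2 n ζ (Pfun n h i j) = (ζ ^ (i : ℤ) + ζ ^ (-(i : ℤ))) • Pfun n h i j
        ∧ Astar3 n ζ (Pfun n h i j) = (ζ ^ (j : ℤ) + ζ ^ (-(j : ℤ))) • Pfun n h i j) :=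
  stmt_10_general D n hn ζ
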